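/- arXiv:2408.13695 — 3 statements merged into one kernel-verified Lean document; each statement's English description precedes it below -/
import Mathlib

section
/- Let p > 3 be a prime with p ≡ 3 (mod 4) and let s ∈ F_p \ {0, 1} be such that the Legendre elliptic curve E_s over F_p is supersingular. Then there exists t ∈ F_p with −t² ∉ {0, 1} such that E_s is isomorphic over F_p to the Legendre elliptic curve E_{−t²}. -/
open WeierstrassCurve

/-- The Legendre elliptic curve `y² = x(x-1)(x-s)` over a commutative ring. -/
def LegendreCurve {F : Type} [CommRing F] (s : F) : WeierstrassCurve F :=
  ⟨0, -(s + 1), 0, s, 0⟩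

/-- A Weierstrass curve over a finite field of characteristic `p` is supersingular if the number
of its rational points (including the point at infinity) is congruent to `1` modulo `p`. -/
def IsSupersingular (p : ℕ) {F : Type} [Field F] (W : WeierstrassCurve F) : Prop :=
  Nat.card W.toAffine.Point ≡ 1 [MOD p]

/-!
The change of variables `x ↦ u²x + r`, `y ↦ u³y` keeps a curve `y² = x(x-1)(x-s)` in Legendre
form when `r` is one of the roots `0, 1, s` and `u²` is the difference of another root and `r`.
Over a finite field in which `-1` is not a square, every element or its negative is a square;
so either `-s` is a square, or `s - 1` is, or both `s` and `1 - s` are, and translating by the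
root `0`, `1` or `s` respectively yields a parameter of the form `-t²`.
-/

theorem FiniteField.isSquare_or_isSquare_neg {F : Type*} [Field F] [Fintype F]
    (hF : ¬IsSquare (-1 : F)) (a : F) : IsSquare a ∨ IsSquare (-a) := by
  classical
  by_contra! h
  have ha : a ≠ 0 := by rintro rfl; exact h.1 IsSquare.zero
  have hχ : quadraticChar F (-a) = 1 := by
    rw [neg_eq_neg_one_mul, map_mul, quadraticChar_neg_one_iff_not_isSquare.mpr hF,
      quadraticChar_neg_one_iff_not_isSquare.mpr h.1]
    norm_num
  exact h.2 ((quadraticChar_one_iff_isSquare (neg_ne_zero.mpr ha)).mp hχ)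

section LegendreCurve

variable {F : Type} [Field F] {s : F}

theorem variableChange_legendreCurve_of_sq_eq_sub_one (u : Fˣ) (hu : (u : F) ^ 2 = s - 1) :
    (⟨u, 1, 0, 0⟩ : VariableChange F) • LegendreCurve s = LegendreCurve (-(u : F)⁻¹ ^ 2) := by
  obtain rfl : s = u ^ 2 + 1 := by linear_combination -hu
  ext <;>
    simp only [variableChange_def, LegendreCurve, Units.val_inv_eq_inv_val] <;>
    field_simp <;> ring

theorem variableChange_legendreCurve_of_sq_eq_one_sub (u : Fˣ) (hu : (u : F) ^ 2 = 1 - s) :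
    (⟨u, s, 0, 0⟩ : VariableChange F) • LegendreCurve s = LegendreCurve (-s / (u : F) ^ 2) := by
  obtain rfl : s = 1 - u ^ 2 := by linear_combination hu
  ext <;>
    simp only [variableChange_def, LegendreCurve, Units.val_inv_eq_inv_val] <;>
    field_simp <;> ring

theorem exists_variableChange_legendreCurve_eq_neg_sq [Fintype F] (hF : ¬IsSquare (-1 : F))
    (hs0 : s ≠ 0) (hs1 : s ≠ 1) :
    ∃ t : F, t ≠ 0 ∧ ∃ C : VariableChange F, C • LegendreCurve s = LegendreCurve (-t ^ 2) := by
  have hs1' : s - 1 ≠ 0 := sub_ne_zero.mpr hs1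
  rcases FiniteField.isSquare_or_isSquare_neg hF (s - 1) with ⟨b, hb⟩ | ⟨c, hc⟩
  · have hb0 : b ≠ 0 := by rintro rfl; exact hs1' (by simpa using hb)
    refine ⟨b⁻¹, inv_ne_zero hb0, _,
      variableChange_legendreCurve_of_sq_eq_sub_one (Units.mk0 b hb0) (by simp [hb, sq])⟩
  have hc0 : c ≠ 0 := by rintro rfl; exact hs1' (by linear_combination -hc)
  rcases FiniteField.isSquare_or_isSquare_neg hF s with ⟨a, ha⟩ | ⟨t, ht⟩
  · have ha0 : a ≠ 0 := by rintro rfl; exact hs0 (by simpa using ha)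
    refine ⟨a / c, div_ne_zero ha0 hc0, _,
      (variableChange_legendreCurve_of_sq_eq_one_sub (Units.mk0 c hc0)
        (by simp only [Units.val_mk0]; linear_combination -hc)).trans ?_⟩
    rw [Units.val_mk0, ha]
    congr 1
    ring
  · have ht0 : t ≠ 0 := by rintro rfl; exact hs0 (by simpa using ht)
    exact ⟨t, ht0, 1, by rw [one_smul, sq, ← ht, neg_neg]⟩

end LegendreCurve

theorem legendre_supersingular_isom_neg_square_general (p : ℕ) [Fact p.Prime]
    (hp : p % 4 = 3) (s : ZMod p) (hs0 : s ≠ 0) (hs1 : s ≠ 1) :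
    ∃ t : ZMod p, -t ^ 2 ≠ 0 ∧ -t ^ 2 ≠ 1 ∧
      ∃ C : WeierstrassCurve.VariableChange (ZMod p),
        C • (LegendreCurve s) = LegendreCurve (-t ^ 2) := by
  have hF : ¬IsSquare (-1 : ZMod p) := by
    rw [FiniteField.isSquare_neg_one_iff, ZMod.card]
    exact not_not.mpr hp
  obtain ⟨t, ht, C, hC⟩ := exists_variableChange_legendreCurve_eq_neg_sq hF hs0 hs1
  exact ⟨t, neg_ne_zero.mpr (pow_ne_zero 2 ht), fun h ↦ hF ⟨t, by linear_combination h⟩, C, hC⟩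

/-- Let `p > 3` be a prime with `p ≡ 3 (mod 4)` and let `s ∈ F_p \ {0,1}` be such that the
Legendre curve `E_s` over `F_p` is supersingular. Then `E_s` is isomorphic over `F_p`
(via an `F_p`-rational change of Weierstrass coordinates) to `E_{-t²}` for some `t ∈ F_p`
with `-t² ∉ {0, 1}`. -/
theorem legendre_supersingular_isom_neg_square (p : ℕ) [Fact p.Prime] (hp3 : 3 < p)
    (hp : p % 4 = 3) (s : ZMod p) (hs0 : s ≠ 0) (hs1 : s ≠ 1)
    (hss : IsSupersingular p (LegendreCurve s)) :
    ∃ t : ZMod p, -t ^ 2 ≠ 0 ∧ -t ^ 2 ≠ 1 ∧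
      ∃ C : WeierstrassCurve.VariableChange (ZMod p),
        C • (LegendreCurve s) = LegendreCurve (-t ^ 2) :=
  legendre_supersingular_isom_neg_square_general p hp s hs0 hs1
end

section
/- Let p be a prime with p ≡ 7 (mod 8) and let t ∈ F_p with t ≠ 0. If the elliptic curve E : y² = x(x−1)(x+t²) over F_p is supersingular, then t² + 1 is a nonzero square in F_p. -/
open WeierstrassCurve

/-- The elliptic curve `y² = x(x-1)(x+t²)`, i.e. `y² = x³ + (t²-1)x² - t²x`. -/
def TCurve {F : Type} [CommRing F] (t : F) : WeierstrassCurve F :=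
  ⟨0, t ^ 2 - 1, 0, -t ^ 2, 0⟩

/-!
If `#E(𝔽_p) ≡ 1 (mod p)`, the trivial bound `#E(𝔽_p) ≤ 2p + 1` and the rational point
`(0, 0)` of order two force `#E(𝔽_p) = p + 1`, which is divisible by `8`. As `E[2]` has only
four points, `E(𝔽_p)` then has a point `P` of order four, and `2P = (e, 0)` with
`e ∈ {0, 1, -t²}`. The duplication formula gives `x(2P) - e' = (((x - e')² - f'(e')) / 2y)²`
for every root `e'` of `f(x) = x(x - 1)(x + t²)`, so `e - e'` is a square for all roots `e'`.
Since `-1` is not a square modulo `p`, this excludes `e = 0` and `e = -t²`, and `e = 1` gives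
that `1 + t²` is a square.
-/

theorem exists_addOrderOf_eq_four {G : Type*} [AddCommGroup G] [Finite G] {n : ℕ}
    (hG : 2 ^ n ∣ Nat.card G) (hT : Nat.card {x : G // 2 • x = 0} < 2 ^ n) :
    ∃ x : G, addOrderOf x = 4 := by
  let φ : G →+ G := nsmulAddMonoidHom 2
  have hcard : Nat.card φ.range * Nat.card φ.ker = Nat.card G := by
    rw [← AddSubgroup.index_ker, mul_comm, AddSubgroup.card_mul_index]
  have heven : 2 ∣ Nat.card φ.range := by
    by_contra hodd
    have hcop : Nat.Coprime (2 ^ n) (Nat.card φ.range) :=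
      Nat.Coprime.pow_left n ((Nat.Prime.coprime_iff_not_dvd Nat.prime_two).mpr hodd)
    have := Nat.le_of_dvd Nat.card_pos (hcop.dvd_of_dvd_mul_left (hcard ▸ hG))
    exact this.not_gt hT
  obtain ⟨y, hy⟩ := exists_prime_addOrderOf_dvd_card' 2 heven
  obtain ⟨x, hx⟩ := y.2
  rw [← AddSubgroup.addOrderOf_coe, ← hx, nsmulAddMonoidHom_apply] at hy
  have h4 : 4 • x = 0 := by
    have := addOrderOf_nsmul_eq_zero (2 • x)
    rwa [hy, smul_smul] at this
  have hle := Nat.le_of_dvd four_pos (addOrderOf_dvd_of_nsmul_eq_zero h4)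
  rw [addOrderOf_nsmul' x two_ne_zero] at hy
  refine ⟨x, ?_⟩
  interval_cases h : addOrderOf x <;> simp_all

namespace WeierstrassCurve.Affine

instance {R : Type*} [CommRing R] [Finite R] (W : Affine R) : Finite W.Point :=
  .of_equiv (Option _) W.nonsingularPointEquiv.symm

section

variable {F : Type*} [Field F] (W : Affine F)

lemma card_nonsingular_le_two (x : F) : Nat.card {y // W.Nonsingular x y} ≤ 2 := by
  rcases isEmpty_or_nonempty {y // W.Nonsingular x y} with _ | ⟨y₀, hy₀⟩
  · simp
  have hsub : {y | W.Nonsingular x y} ⊆ {y₀, W.negY x y₀} := fun y hy =>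
    W.Y_eq_of_X_eq hy.1 hy₀.1 rfl
  calc Nat.card {y // W.Nonsingular x y} = Set.ncard {y | W.Nonsingular x y} :=
        Nat.card_coe_set_eq _
    _ ≤ Set.ncard {y₀, W.negY x y₀} := Set.ncard_le_ncard hsub
    _ ≤ 2 := (Set.ncard_insert_le _ _).trans (by simp)

lemma card_point_le [Finite F] : Nat.card W.Point ≤ 2 * Nat.card F + 1 := by
  have := Fintype.ofFinite F
  rw [Nat.card_congr W.nonsingularPointEquiv, WithZero, Finite.card_option,
    Nat.card_congr (Equiv.subtypeProdEquivSigmaSubtype fun x y => W.Nonsingular x y),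
    Nat.card_sigma, Nat.card_eq_fintype_card (α := F), mul_comm]
  gcongr
  exact Finset.sum_le_card_nsmul _ _ _ fun x _ => W.card_nonsingular_le_two x

end

variable {F : Type*} [Field F] {W : Affine F}

lemma negY_eq_neg (ha₁ : W.a₁ = 0) (ha₃ : W.a₃ = 0) (x y : F) : W.negY x y = -y := by
  simp [negY, ha₁, ha₃]

lemma Y_eq_negY_iff (ha₁ : W.a₁ = 0) (ha₃ : W.a₃ = 0) (h2 : (2 : F) ≠ 0) {x y : F} :
    y = W.negY x y ↔ y = 0 := by
  rw [negY_eq_neg ha₁ ha₃]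
  constructor
  · intro hy
    exact (mul_eq_zero.mp (by linear_combination hy : 2 * y = 0)).resolve_left h2
  · rintro rfl
    exact neg_zero.symm

lemma equation_zero_iff (ha₁ : W.a₁ = 0) (ha₃ : W.a₃ = 0) {x : F} :
    W.Equation x 0 ↔ x ^ 3 + W.a₂ * x ^ 2 + W.a₄ * x + W.a₆ = 0 := by
  rw [equation_iff, ha₁, ha₃, eq_comm]
  ring_nf

variable [DecidableEq F]

lemma Y_eq_zero_of_add_self_eq_zero (ha₁ : W.a₁ = 0) (ha₃ : W.a₃ = 0) (h2 : (2 : F) ≠ 0)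
    {x y : F} {h : W.Nonsingular x y} (hP : Point.some x y h + Point.some x y h = 0) : y = 0 := by
  by_contra hy
  rw [Point.add_self_of_Y_ne (mt (Y_eq_negY_iff ha₁ ha₃ h2).mp hy)] at hP
  exact Point.some_ne_zero _ hP

/-- On `y² = f(x)`, the witness is `((x - e)² - f'(e)) / 2y`. -/
lemma isSquare_addX_sub (ha₁ : W.a₁ = 0) (ha₃ : W.a₃ = 0) (h2 : (2 : F) ≠ 0) {x y e : F}
    (hy : y ≠ 0) (hxy : W.Equation x y) (he : W.Equation e 0) :
    IsSquare (W.addX x x (W.slope x x y y) - e) := by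
  have hy' : y ≠ W.negY x y := mt (Y_eq_negY_iff ha₁ ha₃ h2).mp hy
  rw [equation_iff, ha₁, ha₃] at hxy
  rw [equation_zero_iff ha₁ ha₃] at he
  refine ⟨((x - e) ^ 2 - (3 * e ^ 2 + 2 * W.a₂ * e + W.a₄)) / (2 * y), ?_⟩
  rw [slope_of_Y_ne rfl hy', negY_eq_neg ha₁ ha₃, addX, ha₁, sub_neg_eq_add, ← two_mul]
  have h2y : 2 * y ≠ 0 := mul_ne_zero h2 hy
  field_simp
  linear_combination -4 * (e + 2 * x + W.a₂) * he - 4 * (W.a₂ + 2 * x + e) * hxy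

lemma isSquare_sub_of_add_self_eq_some (ha₁ : W.a₁ = 0) (ha₃ : W.a₃ = 0) (h2 : (2 : F) ≠ 0)
    {P : W.Point} {x y e : F} {h : W.Nonsingular x y} (hP : P + P = .some x y h)
    (he : W.Equation e 0) : IsSquare (x - e) := by
  rcases P with _ | ⟨x₀, y₀, h₀⟩
  · exact absurd hP.symm (Point.some_ne_zero h)
  by_cases hy₀ : y₀ = 0
  · rw [Point.add_self_of_Y_eq ((Y_eq_negY_iff ha₁ ha₃ h2).mpr hy₀)] at hP
    exact absurd hP.symm (Point.some_ne_zero h)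
  rw [Point.add_self_of_Y_ne (mt (Y_eq_negY_iff ha₁ ha₃ h2).mp hy₀), Point.some.injEq] at hP
  rw [← hP.1]
  exact isSquare_addX_sub ha₁ ha₃ h2 hy₀ h₀.1 he

lemma exists_forall_isSquare_sub_of_addOrderOf_eq_four (ha₁ : W.a₁ = 0) (ha₃ : W.a₃ = 0)
    (h2 : (2 : F) ≠ 0) {P : W.Point} (hP : addOrderOf P = 4) :
    ∃ e, W.Equation e 0 ∧ ∀ e', W.Equation e' 0 → IsSquare (e - e') := by
  have hPP : P + P ≠ 0 := by
    rw [← two_nsmul]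
    exact nsmul_ne_zero_of_lt_addOrderOf two_ne_zero (by omega)
  have hPPPP : (P + P) + (P + P) = 0 := by
    rw [← two_nsmul, ← two_nsmul, smul_smul, show 2 * 2 = addOrderOf P from hP.symm,
      addOrderOf_nsmul_eq_zero]
  rcases hQ : P + P with _ | ⟨x, y, h⟩
  · exact absurd hQ hPP
  rw [hQ] at hPPPP
  obtain rfl := Y_eq_zero_of_add_self_eq_zero ha₁ ha₃ h2 hPPPP
  exact ⟨x, h.1, fun e' he' => isSquare_sub_of_add_self_eq_some ha₁ ha₃ h2 hQ he'⟩

end WeierstrassCurve.Affine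

lemma card_point_eq_of_isSupersingular {p : ℕ} [hp : Fact p.Prime] (hp2 : p ≠ 2)
    {W : WeierstrassCurve (ZMod p)} (h2 : 2 ∣ Nat.card W.toAffine.Point)
    (hss : IsSupersingular p W) : Nat.card W.toAffine.Point = p + 1 := by
  have hle := W.toAffine.card_point_le
  rw [Nat.card_zmod] at hle
  have hodd := Nat.odd_iff.mp (hp.out.odd_of_ne_two hp2)
  have hmod : Nat.card W.toAffine.Point % p = 1 := Eq.trans hss (Nat.mod_eq_of_lt hp.out.one_lt)
  have hdiv := Nat.div_add_mod (Nat.card W.toAffine.Point) p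
  have hq : Nat.card W.toAffine.Point / p < 3 := by
    rw [Nat.div_lt_iff_lt_mul hp.out.pos]
    omega
  interval_cases hq : Nat.card W.toAffine.Point / p <;> omega

namespace TCurve

open Affine

variable {F : Type} [Field F] (t : F)

lemma equation_zero_iff (e : F) :
    (TCurve t).toAffine.Equation e 0 ↔ e = 0 ∨ e = 1 ∨ e = -t ^ 2 := by
  rw [Affine.equation_zero_iff rfl rfl]
  change e ^ 3 + (t ^ 2 - 1) * e ^ 2 + -t ^ 2 * e + 0 = 0 ↔ _
  rw [show e ^ 3 + (t ^ 2 - 1) * e ^ 2 + -t ^ 2 * e + 0 = e * (e - 1) * (e + t ^ 2) by ring,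
    mul_eq_zero, mul_eq_zero, sub_eq_zero, add_eq_zero_iff_eq_neg, or_assoc]

lemma nonsingular_zero_zero {t : F} (ht : t ≠ 0) : (TCurve t).toAffine.Nonsingular 0 0 := by
  refine (nonsingular_iff _ _).mpr ⟨(equation_zero_iff t 0).mpr (Or.inl rfl), Or.inl ?_⟩
  change 0 * 0 ≠ 3 * 0 ^ 2 + 2 * (t ^ 2 - 1) * 0 + -t ^ 2
  simpa using ht

variable [DecidableEq F]

lemma two_dvd_card_point {t : F} (ht : t ≠ 0) :
    2 ∣ Nat.card (TCurve t).toAffine.Point := by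
  have hY : (0 : F) = (TCurve t).toAffine.negY 0 0 := by rw [negY_eq_neg rfl rfl, neg_zero]
  have hP : addOrderOf (Point.some 0 0 (nonsingular_zero_zero ht)) = 2 :=
    addOrderOf_eq_prime (by rw [two_nsmul, Point.add_self_of_Y_eq hY]) (Point.some_ne_zero _)
  exact hP ▸ addOrderOf_dvd_natCard _

lemma card_two_torsion_le (h2 : (2 : F) ≠ 0) :
    Nat.card {P : (TCurve t).toAffine.Point // 2 • P = 0} ≤ 4 := by
  let S : Finset (Fin 2 → F) := {![1, 0], ![0, 1], ![1, 1], ![-t ^ 2, 1]}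
  calc Nat.card {P : (TCurve t).toAffine.Point // 2 • P = 0}
      = Set.ncard {P : (TCurve t).toAffine.Point | 2 • P = 0} := Nat.card_coe_set_eq _
    _ ≤ (S : Set (Fin 2 → F)).ncard := Set.ncard_le_ncard_of_injOn Point.xRep ?_ ?_
    _ = S.card := Set.ncard_coe_finset S
    _ ≤ 4 := Finset.card_le_four
  · rintro (_ | ⟨x, y, h⟩) hP
    · exact Finset.mem_insert_self _ _
    obtain rfl := Y_eq_zero_of_add_self_eq_zero rfl rfl h2 ((two_nsmul _).symm.trans hP)
    rcases (equation_zero_iff t x).mp h.1 with rfl | rfl | rfl <;> simp [S, Point.xRep_some]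
  · intro P _ Q hQ hPQ
    rcases Point.xRep_eq_xRep_iff.mp hPQ with h | h
    · exact h
    · rw [h, neg_eq_of_add_eq_zero_right ((two_nsmul Q).symm.trans hQ)]

end TCurve

/-- Let `p ≡ 7 (mod 8)` be a prime and `t ∈ F_p`, `t ≠ 0`. If the elliptic curve
`y² = x(x-1)(x+t²)` over `F_p` is supersingular, then `t² + 1` is a nonzero square in
`F_p`. -/
theorem sq_add_one_isSquare_of_supersingular (p : ℕ) [Fact p.Prime] (hp : p % 8 = 7)
    (t : ZMod p) (ht : t ≠ 0) (hss : IsSupersingular p (TCurve t)) :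
    t ^ 2 + 1 ≠ 0 ∧ IsSquare (t ^ 2 + 1) := by
  have hp2 : p ≠ 2 := by omega
  have h2 : (2 : ZMod p) ≠ 0 := Ring.two_ne_zero ((ZMod.ringChar_zmod_n p).trans_ne hp2)
  have hneg : ¬IsSquare (-1 : ZMod p) := by
    rw [ZMod.exists_sq_eq_neg_one_iff]
    omega
  have ht1 : t ^ 2 + 1 ≠ 0 := fun h => hneg ⟨t, by linear_combination -h⟩
  refine ⟨ht1, ?_⟩
  have hN := card_point_eq_of_isSupersingular hp2 (TCurve.two_dvd_card_point ht) hss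
  obtain ⟨P, hP⟩ := exists_addOrderOf_eq_four (n := 3) (by rw [hN]; omega)
    ((TCurve.card_two_torsion_le t h2).trans_lt (by norm_num))
  obtain ⟨e, he, hsq⟩ := Affine.exists_forall_isSquare_sub_of_addOrderOf_eq_four rfl rfl h2 hP
  rcases (TCurve.equation_zero_iff t e).mp he with rfl | rfl | rfl
  · exact absurd (by simpa using hsq 1 ((TCurve.equation_zero_iff t 1).mpr (by simp))) hneg
  · simpa [add_comm] using hsq (-t ^ 2) ((TCurve.equation_zero_iff t _).mpr (by simp))
  · obtain ⟨r, hr⟩ := hsq 0 ((TCurve.equation_zero_iff t 0).mpr (by simp))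
    exact absurd ⟨r / t, by field_simp; linear_combination hr⟩ hneg
end

section
/- Let p be a prime with p ≡ 1 (mod 4) and let μ ∈ F_{p²} \ F_p be such that the Legendre elliptic curve E_{μ^{p−1}} over F_{p²} is supersingular. Then −(μ − μ^p)²/(μ·μ^p) is a square in F_p. -/
/-!
Put `ν = μ^p`, `s = μ^(p-1) = ν/μ` and let `H_n(α, β)` be the coefficient of `X^n` in
`(X + α)^n (X + β)^n`. Since `∑_{x ∈ 𝔽_q} x^k` vanishes unless `q - 1 ∣ k`, the curve
`y² = x(x + α)(x + β)` over `𝔽_q`, `q = 2n + 1`, has `1 - H_n(α, β)` points modulo `p`.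
Supersingularity of `E_s` over `𝔽_{p²}` thus gives `H_{m(p+1)}(-1, -s) = 0` with `m = (p-1)/2`, and
`H_{m(p+1)} = H_m^{p+1}` in characteristic `p`, so `H_m(μ, ν) = (-μ)^m H_m(-1, -s) = 0`: the curve
`y² = x(x² + Tx + N)` over `𝔽_p` with `T = μ + ν`, `N = μν` is supersingular as well. Its
discriminant `T² - 4N = (μ - ν)²` is not a square in `𝔽_p`. If `N = r²`, the involution
`x ↦ N/x` preserves the quadratic character of `x(x² + Tx + N)`, and its fixed points `±r` carry
opposite characters, so an odd number of `x` have character `-1`; supersingularity makes this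
number `(p-1)/2`, which is even. So `N` and `T² - 4N` are non-squares, and `-(T² - 4N)/N` is a
square because `-1` is.
-/

open WeierstrassCurve

open Polynomial Finset

namespace FiniteField

variable {K : Type*} [Field K] [Fintype K]

theorem sum_pow_of_ne_zero {k : ℕ} (hk : k ≠ 0) :
    ∑ x : K, x ^ k = if Fintype.card K - 1 ∣ k then -1 else 0 := by
  classical
  rw [Fintype.sum_eq_add_sum_subtype_ne _ 0, zero_pow hk, zero_add, ← sum_pow_units K k]
  exact Fintype.sum_equiv unitsEquivNeZero.symm _ _ fun _ => rfl

theorem sum_pow_of_lt_two_mul {k : ℕ} (hk : k < 2 * (Fintype.card K - 1)) :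
    ∑ x : K, x ^ k = if k = Fintype.card K - 1 then -1 else 0 := by
  rcases lt_or_ge k (Fintype.card K - 1) with hlt | hge
  · rw [sum_pow_lt_card_sub_one K k hlt, if_neg hlt.ne]
  have hq : 0 < Fintype.card K - 1 := Nat.sub_pos_of_lt Fintype.one_lt_card
  rw [sum_pow_of_ne_zero (by omega)]
  exact if_congr ⟨fun h => Nat.eq_of_dvd_of_lt_two_mul (by omega) h hk, fun h => h ▸ dvd_rfl⟩
    rfl rfl

theorem sum_eval_algebraMap_eq_neg_coeff {L : Type*} [CommRing L] [Algebra K L] {g : L[X]}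
    (hg : g.natDegree < 2 * (Fintype.card K - 1)) :
    ∑ x : K, g.eval (algebraMap K L x) = -g.coeff (Fintype.card K - 1) := by
  have hq : 0 < Fintype.card K - 1 := Nat.sub_pos_of_lt Fintype.one_lt_card
  simp_rw [eval_eq_sum_range' hg, ← map_pow]
  rw [Finset.sum_comm]
  simp_rw [← Finset.mul_sum, ← map_sum]
  rw [Finset.sum_congr rfl fun k hk => by rw [sum_pow_of_lt_two_mul (mem_range.mp hk)]]
  simp only [apply_ite, map_neg, map_one, map_zero, mul_neg, mul_one, mul_zero]
  rw [Finset.sum_ite_eq' (range _) _ (fun k => -g.coeff k), if_pos (mem_range.mpr (by omega))]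

end FiniteField

/-- `hasseCoeff n α β = ∑ i ≤ n, (n.choose i)² α^(n-i) β^i`; for `n = (p-1)/2` it is the Hasse
invariant of `y² = x(x+α)(x+β)`. -/
noncomputable def hasseCoeff {R : Type*} [CommRing R] (n : ℕ) (α β : R) : R :=
  ((X + C α) ^ n * (X + C β) ^ n).coeff n

section hasseCoeff

variable {R : Type*} [CommRing R]

theorem natDegree_X_add_C_pow_mul_X_add_C_pow_le (n : ℕ) (α β : R) :
    ((X + C α) ^ n * (X + C β) ^ n).natDegree ≤ 2 * n := by
  have h (a : R) : ((X + C a) ^ n).natDegree ≤ n :=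
    (natDegree_pow_le_of_le n (natDegree_add_C.trans_le natDegree_X_le)).trans_eq (mul_one n)
  exact natDegree_mul_le.trans ((add_le_add (h α) (h β)).trans_eq (two_mul n).symm)

theorem hasseCoeff_mul_mul (n : ℕ) (c α β : R) :
    hasseCoeff n (c * α) (c * β) = c ^ n * hasseCoeff n α β := by
  simp only [hasseCoeff, coeff_mul, coeff_X_add_C_pow, Finset.mul_sum]
  refine Finset.sum_congr rfl fun ij hij => ?_
  have hn : n - ij.1 + (n - ij.2) = n := by rw [HasAntidiagonal.mem_antidiagonal] at hij; omega
  rw [mul_pow, mul_pow, show c ^ n = c ^ (n - ij.1) * c ^ (n - ij.2) by rw [← pow_add, hn]]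
  ring

theorem Polynomial.coeff_pow_char_add_one (p : ℕ) [Fact p.Prime] [CharP R p] {G : R[X]}
    (hG : G.natDegree < p) {k : ℕ} (hk : k < p) :
    (G ^ (p + 1)).coeff (k * p + k) = G.coeff k ^ (p + 1) := by
  have hp : 0 < p := (Fact.out : p.Prime).pos
  -- `G ^ p` is `G` with Frobenius applied to its coefficients and `X` replaced by `X ^ p`; since
  -- `deg G < p`, the only pair `(i, j)` with `i + j = k * p + k` contributing is `(k * p, k)`.
  rw [pow_succ, ← map_frobenius_expand, coeff_mul, Finset.sum_eq_single (k * p, k)]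
  · rw [coeff_map, coeff_expand_mul hp, frobenius_def, pow_succ]
  · rintro ⟨i, j⟩ hij hne
    rw [HasAntidiagonal.mem_antidiagonal] at hij
    rcases lt_or_ge j p with hj | hj
    · rw [coeff_map, coeff_expand hp, if_neg, map_zero, zero_mul]
      rintro ⟨c, rfl⟩
      obtain rfl : j = k := by
        have := congrArg (· % p) hij
        simp only [Nat.mul_add_mod_self_left, Nat.mul_add_mod_self_right] at this
        rwa [Nat.mod_eq_of_lt hj, Nat.mod_eq_of_lt hk] at this
      obtain rfl : c = j := Nat.eq_of_mul_eq_mul_left hp (by linarith)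
      exact hne (by rw [mul_comm])
    · rw [coeff_eq_zero_of_natDegree_lt (hG.trans_le hj), mul_zero]
  · simp

theorem hasseCoeff_mul_char_add_self (p : ℕ) [Fact p.Prime] [CharP R p] {m : ℕ} (hm : 2 * m < p)
    (α β : R) : hasseCoeff (m * p + m) α β = hasseCoeff m α β ^ (p + 1) := by
  rw [hasseCoeff, hasseCoeff, ← coeff_pow_char_add_one p
    ((natDegree_X_add_C_pow_mul_X_add_C_pow_le m α β).trans_lt hm) (by omega)]
  congr 1
  ring

theorem FiniteField.sum_pow_mul_add_mul_add {K : Type*} [Field K] [Fintype K] [Algebra K R]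
    {n : ℕ} (hK : Fintype.card K = 2 * n + 1) (α β : R) :
    ∑ x : K, (algebraMap K R x * (algebraMap K R x + α) * (algebraMap K R x + β)) ^ n =
      -hasseCoeff n α β := by
  have hn : 0 < n := by have := Fintype.one_lt_card (α := K); omega
  have h := sum_eval_algebraMap_eq_neg_coeff (K := K)
    (g := X ^ n * ((X + C α) ^ n * (X + C β) ^ n)) ?_
  · rw [hK, show 2 * n + 1 - 1 = n + n by omega, coeff_X_pow_mul] at h
    simpa [hasseCoeff, mul_pow, mul_assoc] using h
  · refine (natDegree_mul_le.trans (add_le_add (natDegree_X_pow_le n)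
      (natDegree_X_add_C_pow_mul_X_add_C_pow_le n α β))).trans_lt ?_
    omega

theorem FiniteField.sum_pow_eq_zero_of_hasseCoeff_eq_zero {K L : Type*} [Field K] [Fintype K]
    [Field L] [Algebra K L] {n : ℕ} (hK : Fintype.card K = 2 * n + 1) {T N : K} {μ ν : L}
    (hT : algebraMap K L T = μ + ν) (hN : algebraMap K L N = μ * ν) (h : hasseCoeff n μ ν = 0) :
    ∑ x : K, (x * (x ^ 2 + T * x + N)) ^ n = 0 := by
  apply (algebraMap K L).injective
  rw [map_sum, map_zero, ← neg_zero, ← h, ← sum_pow_mul_add_mul_add hK]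
  refine Finset.sum_congr rfl fun x _ => ?_
  rw [map_pow, map_mul, map_add, map_add, map_mul, map_pow, hT, hN]
  ring

end hasseCoeff

section LegendreCurve

variable {K : Type} [Field K]

theorem legendreCurve_equation_iff (s x y : K) :
    (LegendreCurve s).toAffine.Equation x y ↔ y ^ 2 = x * (x - 1) * (x - s) := by
  rw [Affine.equation_iff]
  change y ^ 2 + 0 * x * y + 0 * y = x ^ 3 + -(s + 1) * x ^ 2 + s * x + 0 ↔ _
  constructor <;> intro h <;> linear_combination h

theorem legendreCurve_Δ (s : K) : (LegendreCurve s).Δ = 16 * (s * (s - 1)) ^ 2 := by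
  simp only [WeierstrassCurve.Δ, WeierstrassCurve.b₂, WeierstrassCurve.b₄, WeierstrassCurve.b₆,
    WeierstrassCurve.b₈, LegendreCurve]
  ring

variable [Fintype K]

theorem FiniteField.natCast_card_sq_eq_pow_add_one (hK : ringChar K ≠ 2) (c : K) :
    (Nat.card {y : K // y ^ 2 = c} : K) = c ^ (Fintype.card K / 2) + 1 := by
  classical
  have h := quadraticChar_card_sqrts hK c
  rw [Set.toFinset_card] at h
  rw [Nat.card_eq_fintype_card, ← quadraticChar_eq_pow_of_char_ne_two' hK, ← Int.cast_natCast]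
  exact_mod_cast congrArg (Int.cast : ℤ → K) h

theorem natCast_card_point_legendreCurve (hK : ringChar K ≠ 2) {s : K} (hs₀ : s ≠ 0)
    (hs₁ : s ≠ 1) :
    (Nat.card (LegendreCurve s).toAffine.Point : K) =
      1 + ∑ x : K, (x * (x - 1) * (x - s)) ^ (Fintype.card K / 2) := by
  have hΔ : (LegendreCurve s).toAffine.Δ ≠ 0 := by
    change (LegendreCurve s).Δ ≠ 0
    rw [legendreCurve_Δ, show (16 : K) = 2 ^ 4 by norm_num]
    exact mul_ne_zero (pow_ne_zero 4 (Ring.two_ne_zero hK))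
      (pow_ne_zero 2 (mul_ne_zero hs₀ (sub_ne_zero.mpr hs₁)))
  let e : {xy : K × K // (LegendreCurve s).toAffine.Nonsingular xy.1 xy.2} ≃
      (x : K) × {y : K // y ^ 2 = x * (x - 1) * (x - s)} :=
    (Equiv.subtypeEquivRight fun xy => by
      rw [← Affine.equation_iff_nonsingular_of_Δ_ne_zero hΔ, legendreCurve_equation_iff]).trans
      (Equiv.subtypeProdEquivSigmaSubtype fun x y => y ^ 2 = x * (x - 1) * (x - s))
  rw [Nat.card_congr ((Affine.nonsingularPointEquiv _).trans (Equiv.optionCongr e)),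
    Finite.card_option, Nat.card_sigma, Nat.cast_add, Nat.cast_sum]
  simp_rw [FiniteField.natCast_card_sq_eq_pow_add_one hK, Finset.sum_add_distrib]
  simp only [Finset.sum_const, Finset.card_univ, nsmul_eq_mul, Nat.cast_card_eq_zero, mul_one,
    add_zero, Nat.cast_one]
  exact add_comm _ _

theorem IsSupersingular.sum_pow_eq_zero {p : ℕ} [CharP K p] (hp : p ≠ 2) {s : K} (hs₀ : s ≠ 0)
    (hs₁ : s ≠ 1) (h : IsSupersingular p (LegendreCurve s)) :
    ∑ x : K, (x * (x - 1) * (x - s)) ^ (Fintype.card K / 2) = 0 := by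
  have hK : ringChar K ≠ 2 := by rwa [ringChar.eq K p]
  have h1 : (Nat.card (LegendreCurve s).toAffine.Point : K) = 1 := by
    rw [← Nat.cast_one]; exact (CharP.natCast_eq_natCast K p).mpr h
  rwa [natCast_card_point_legendreCurve hK hs₀ hs₁, add_eq_left] at h1

end LegendreCurve

theorem hasseCoeff_eq_zero_of_isSupersingular {p : ℕ} [Fact p.Prime] (hp : p ≠ 2) {K : Type}
    [Field K] [Fintype K] [CharP K p] (hK : Fintype.card K = p ^ 2) {μ : K} (hμ : μ ^ p ≠ μ)
    (hss : IsSupersingular p (LegendreCurve (μ ^ (p - 1)))) :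
    hasseCoeff (p / 2) μ (μ ^ p) = 0 := by
  set m := p / 2
  set s := μ ^ (p - 1)
  have hp' : p = 2 * m + 1 := by have := (Fact.out : p.Prime).eq_two_or_odd; omega
  have hμs : μ ^ p = μ * s := by rw [← pow_succ']; congr 1; omega
  have hμ₀ : μ ≠ 0 := by rintro rfl; exact hμ (zero_pow (by omega))
  have hs₀ : s ≠ 0 := pow_ne_zero _ hμ₀
  have hs₁ : s ≠ 1 := fun h => hμ (by rw [hμs, h, mul_one])
  have hcard : Fintype.card K = 2 * (m * p + m) + 1 := by rw [hK, hp']; ring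
  have hzero : ∑ x : K, (x * (x - 1) * (x - s)) ^ (m * p + m) = 0 := by
    rw [show m * p + m = Fintype.card K / 2 by omega]
    exact hss.sum_pow_eq_zero hp hs₀ hs₁
  have hsum := FiniteField.sum_pow_mul_add_mul_add (R := K) hcard (-1) (-s)
  simp only [Algebra.algebraMap_self, RingHom.id_apply, ← sub_eq_add_neg] at hsum
  rw [hzero, zero_eq_neg, hasseCoeff_mul_char_add_self p (by omega),
    pow_eq_zero_iff (by omega)] at hsum
  rw [hμs, show μ = -μ * -1 by ring, show -μ * -1 * s = -μ * -s by ring, hasseCoeff_mul_mul,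
    hsum, mul_zero]

theorem sq_add_mul_add_ne_zero_of_not_isSquare {R : Type*} [CommRing R] {T N : R}
    (hdisc : ¬IsSquare (T ^ 2 - 4 * N)) (x : R) : x ^ 2 + T * x + N ≠ 0 := by
  have := quadratic_ne_zero_of_discrim_ne_sq (a := 1) (b := T) (c := N)
    (fun s hs => hdisc ⟨s, by rw [discrim] at hs; linear_combination hs⟩) x
  rwa [one_mul, ← sq] at this

theorem not_isSquare_of_algebraMap_eq_sq {K L : Type*} [CommRing K] [CommRing L]
    [NoZeroDivisors L] [Algebra K L] {d : K} {δ : L} (hδ : ∀ a : K, algebraMap K L a ≠ δ)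
    (h : algebraMap K L d = δ ^ 2) : ¬IsSquare d := by
  rintro ⟨e, rfl⟩
  rw [map_mul, sq] at h
  rcases mul_self_eq_mul_self_iff.mp h with h | h
  · exact hδ e h
  · exact hδ (-e) (by rw [map_neg, h, neg_neg])

theorem ZMod.exists_algebraMap_eq_of_pow_eq_self {p : ℕ} [Fact p.Prime] {F : Type*} [Field F]
    [Algebra (ZMod p) F] {x : F} (hx : x ^ p = x) :
    ∃ a : ZMod p, algebraMap (ZMod p) F a = x := by
  have : CharP F p := (Algebra.charP_iff (ZMod p) F p).mp inferInstance
  have hx' := (Subfield.mem_bot_iff_pow_eq_self F p).mpr hx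
  rw [← fieldRange_castHom_eq_bot p] at hx'
  obtain ⟨a, ha⟩ := hx'
  exact ⟨a, by rw [← ha]; congr 1; exact Subsingleton.elim _ _⟩

theorem ZMod.algebraMap_ne_sub_pow {p : ℕ} [Fact p.Prime] (hp : p ≠ 2) {F : Type*} [Field F]
    [Algebra (ZMod p) F] {μ : F} (hμ : μ ^ p ≠ μ) (hμμ : (μ ^ p) ^ p = μ) (a : ZMod p) :
    algebraMap (ZMod p) F a ≠ μ - μ ^ p := by
  have : CharP F p := (Algebra.charP_iff (ZMod p) F p).mp inferInstance
  intro ha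
  have h : (μ - μ ^ p) ^ p = μ - μ ^ p := by rw [← ha, ← map_pow, ZMod.pow_card]
  rw [sub_pow_char, hμμ] at h
  exact hμ (mul_left_cancel₀ (Ring.two_ne_zero (by rwa [ringChar.eq F p]))
    (by linear_combination h))

namespace FiniteField

variable {F : Type*} [Field F] [Fintype F]

theorem pow_card_div_two_sq_mul (hF : ringChar F ≠ 2) {c : F} (hc : c ≠ 0) (a : F) :
    (c ^ 2 * a) ^ (Fintype.card F / 2) = a ^ (Fintype.card F / 2) := by
  rw [mul_pow, ← pow_mul, Nat.two_mul_odd_div_two (odd_card_of_char_ne_two hF),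
    pow_card_sub_one_eq_one c hc, one_mul]

theorem pow_card_div_two_of_not_isSquare (hF : ringChar F ≠ 2) {a : F} (ha : ¬IsSquare a) :
    a ^ (Fintype.card F / 2) = -1 := by
  have ha₀ : a ≠ 0 := by rintro rfl; exact ha ⟨0, by ring⟩
  exact (pow_dichotomy hF ha₀).resolve_left fun h => ha ((isSquare_iff hF ha₀).mpr h)

theorem isSquare_neg_div_of_not_isSquare (hF : Fintype.card F % 4 = 1) {a b : F}
    (ha : ¬IsSquare a) (hb : ¬IsSquare b) :
    IsSquare (-a / b) := by
  have hF2 : ringChar F ≠ 2 := by rw [Ne, FiniteField.even_card_iff_char_two]; omega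
  have ha₀ : a ≠ 0 := by rintro rfl; exact ha ⟨0, by ring⟩
  have hb₀ : b ≠ 0 := by rintro rfl; exact hb ⟨0, by ring⟩
  rw [FiniteField.isSquare_iff hF2 (div_ne_zero (neg_ne_zero.mpr ha₀) hb₀), div_pow, neg_pow,
    pow_card_div_two_of_not_isSquare hF2 ha, pow_card_div_two_of_not_isSquare hF2 hb,
    Even.neg_one_pow (Nat.even_iff.mpr (by omega))]
  norm_num

end FiniteField

theorem Finset.even_card_of_involution {α : Type*} (s : Finset α) (ι : α → α)
    (hmem : ∀ x ∈ s, ι x ∈ s) (hinv : ∀ x ∈ s, ι (ι x) = x) (hne : ∀ x ∈ s, ι x ≠ x) :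
    Even s.card := by
  have h := Finset.prod_involution (s := s) (f := fun _ => (-1 : ℤ)) (fun x _ => ι x)
    (fun _ _ => by norm_num) (fun x hx _ => hne x hx) hmem hinv
  rw [Finset.prod_const] at h
  exact (neg_one_pow_eq_one_iff_even (by norm_num)).mp h

section InvolutionCount

variable {F : Type*} [Field F] [Fintype F] [DecidableEq F] {φ : F → F}

theorem even_card_filter_eq_neg_one_sq_ne {N : F} (hN : N ≠ 0) (hφ₀ : φ 0 ≠ -1)
    (hφ : ∀ x ≠ 0, φ (N / x) = φ x) : Even #{x | φ x = -1 ∧ x ^ 2 ≠ N} := by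
  have hx₀ {x : F} (hx : x ∈ ({x | φ x = -1 ∧ x ^ 2 ≠ N} : Finset F)) : x ≠ 0 := by
    rintro rfl; exact hφ₀ (Finset.mem_filter.mp hx).2.1
  refine Finset.even_card_of_involution _ (fun x => N / x) (fun x hx => ?_)
    (fun x hx => by field_simp [hx₀ hx]) (fun x hx h => ?_)
  · have hx' := (Finset.mem_filter.mp hx).2
    refine Finset.mem_filter.mpr ⟨Finset.mem_univ _, by rw [hφ x (hx₀ hx)]; exact hx'.1, ?_⟩
    rw [div_pow, Ne, div_eq_iff (pow_ne_zero 2 (hx₀ hx))]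
    exact fun h => hx'.2 (mul_left_cancel₀ hN (by linear_combination h)).symm
  · rw [div_eq_iff (hx₀ hx)] at h
    exact (Finset.mem_filter.mp hx).2.2 (by linear_combination -h)

theorem card_filter_eq_neg_one_sq_eq (hF : ringChar F ≠ 2) {r : F}
    (hr : φ r = 1 ∨ φ r = -1) (h : φ r * φ (-r) = -1) :
    #{x | φ x = -1 ∧ x ^ 2 = r ^ 2} = 1 := by
  have hne : (1 : F) ≠ -1 := (Ring.neg_one_ne_one_of_char_ne_two hF).symm
  have hset : ({x | φ x = -1 ∧ x ^ 2 = r ^ 2} : Finset F) =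
      {x ∈ ({r, -r} : Finset F) | φ x = -1} := by
    ext x
    simp only [Finset.mem_filter, Finset.mem_univ, true_and, sq_eq_sq_iff_eq_or_eq_neg,
      Finset.mem_insert, Finset.mem_singleton]
    tauto
  rw [hset, filter_insert, filter_singleton]
  rcases hr with hr | hr
  · rw [hr, one_mul] at h
    rw [if_neg (by rw [hr]; exact hne), if_pos h]
    rfl
  · have h' : φ (-r) = 1 := by rw [hr] at h; linear_combination -h
    rw [if_pos hr, if_neg (by rw [h']; exact hne)]
    rfl

end InvolutionCount

theorem FiniteField.odd_card_filter_pow_card_div_two_eq_neg_one {F : Type*} [Field F]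
    [Fintype F] [DecidableEq F] (hF : ringChar F ≠ 2)
    {T N : F} (hdisc : ¬IsSquare (T ^ 2 - 4 * N)) (hN : IsSquare N) :
    Odd #{x | (x * (x ^ 2 + T * x + N)) ^ (Fintype.card F / 2) = -1} := by
  set φ : F → F := fun x => (x * (x ^ 2 + T * x + N)) ^ (Fintype.card F / 2)
  obtain ⟨r, rfl⟩ := hN.exists_sq
  have hr : r ≠ 0 := by rintro rfl; exact hdisc ⟨T, by ring⟩
  have hφ₀ : φ 0 ≠ -1 := by
    have := Fintype.one_lt_card (α := F); have := odd_card_of_char_ne_two hF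
    simp [φ, zero_pow (show Fintype.card F / 2 ≠ 0 by omega)]
  have hφ (x : F) (hx : x ≠ 0) : φ (r ^ 2 / x) = φ x := by
    have : r ^ 2 / x * ((r ^ 2 / x) ^ 2 + T * (r ^ 2 / x) + r ^ 2) =
        (r ^ 2 / x ^ 2) ^ 2 * (x * (x ^ 2 + T * x + r ^ 2)) := by field_simp; ring
    simp only [φ, this]
    exact pow_card_div_two_sq_mul hF (by positivity) _
  have hpm : φ r * φ (-r) = -1 := by
    have : r * (r ^ 2 + T * r + r ^ 2) * (-r * ((-r) ^ 2 + T * -r + r ^ 2)) =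
        (r ^ 2) ^ 2 * (T ^ 2 - 4 * r ^ 2) := by ring
    simp only [φ, ← mul_pow, this, pow_card_div_two_sq_mul hF (pow_ne_zero 2 hr)]
    exact pow_card_div_two_of_not_isSquare hF hdisc
  have h := (even_card_filter_eq_neg_one_sq_ne (pow_ne_zero 2 hr) hφ₀ hφ).one_add
  rw [← card_filter_eq_neg_one_sq_eq (φ := φ) hF
    (pow_dichotomy hF (mul_ne_zero hr (sq_add_mul_add_ne_zero_of_not_isSquare hdisc r))) hpm] at h
  rw [← Finset.card_filter_add_card_filter_not (fun x => x ^ 2 = r ^ 2), Finset.filter_filter,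
    Finset.filter_filter]
  exact h

namespace ZMod

variable {p : ℕ} [Fact p.Prime]

theorem two_mul_card_filter_pow_eq_neg_one_add_one (hp : p ≠ 2) {g : ZMod p → ZMod p}
    (hg : ∀ x, g x = 0 ↔ x = 0) (hsum : ∑ x, g x ^ (p / 2) = 0) :
    2 * #{x | g x ^ (p / 2) = -1} + 1 = p := by
  set S : Finset (ZMod p) := {x | g x ^ (p / 2) = -1}
  have hp3 : 3 ≤ p := by have := (Fact.out : p.Prime).two_le; omega
  have hg₀ : g 0 ^ (p / 2) = 0 := by rw [(hg 0).mpr rfl, zero_pow (by omega)]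
  have hS₀ : (0 : ZMod p) ∉ S := by simp [S, hg₀]
  have hterm (x : ZMod p) :
      g x ^ (p / 2) = 1 - (if x = 0 then 1 else 0) - 2 * (if x ∈ S then 1 else 0) := by
    by_cases hx : x = 0
    · subst hx
      rw [hg₀, if_pos rfl, if_neg hS₀]
      ring
    have hF : ringChar (ZMod p) ≠ 2 := by rwa [ZMod.ringChar_zmod_n]
    have := FiniteField.pow_dichotomy hF (mt (hg x).mp hx)
    rw [ZMod.card] at this
    rcases this with h | h
    · have hxS : x ∉ S := by simp [S, h, (Ring.neg_one_ne_one_of_char_ne_two hF).symm]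
      rw [h, if_neg hx, if_neg hxS]
      ring
    · have hxS : x ∈ S := by simp [S, h]
      rw [h, if_neg hx, if_pos hxS]
      ring
  have hdvd : p ∣ 2 * #S + 1 := by
    rw [← ZMod.natCast_eq_zero_iff]
    simp_rw [hterm] at hsum
    simp only [mul_ite, mul_one, mul_zero, Finset.sum_sub_distrib, Finset.sum_const,
      Finset.card_univ, ZMod.card, nsmul_eq_mul, CharP.cast_eq_zero, Finset.sum_ite_eq',
      Finset.mem_univ, ↓reduceIte, zero_sub, Finset.sum_ite_mem, Finset.univ_inter] at hsum
    push_cast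
    linear_combination -hsum
  have hlt : #S < p := by simpa using Finset.card_lt_univ_of_notMem hS₀
  exact Nat.eq_of_dvd_of_lt_two_mul (by omega) hdvd (by omega)

theorem isSquare_neg_discrim_div_of_sum_eq_zero (hp : p % 4 = 1) {T N : ZMod p}
    (hdisc : ¬IsSquare (T ^ 2 - 4 * N)) (hsum : ∑ x, (x * (x ^ 2 + T * x + N)) ^ (p / 2) = 0) :
    IsSquare (-(T ^ 2 - 4 * N) / N) := by
  have hcard : Fintype.card (ZMod p) % 4 = 1 := by rwa [ZMod.card]
  refine FiniteField.isSquare_neg_div_of_not_isSquare hcard hdisc fun hN => ?_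
  have hF : ringChar (ZMod p) ≠ 2 := by rw [ZMod.ringChar_zmod_n]; omega
  have hodd := FiniteField.odd_card_filter_pow_card_div_two_eq_neg_one hF hdisc hN
  have hcount := two_mul_card_filter_pow_eq_neg_one_add_one (by omega)
    (fun x => by simp [sq_add_mul_add_ne_zero_of_not_isSquare hdisc x]) hsum
  rw [ZMod.card, Nat.odd_iff] at hodd
  omega

end ZMod

/-- Let `p ≡ 1 (mod 4)` be a prime and `μ ∈ F_{p²} \ F_p` such that the Legendre curve
`E_{μ^{p-1}}` over `F_{p²}` is supersingular. Then `-(μ - μ^p)²/(μ·μ^p)` is a square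
in `F_p`. -/
theorem neg_sq_div_norm_isSquare (p : ℕ) [Fact p.Prime] (hp : p % 4 = 1)
    (μ : GaloisField p 2) (hμ : μ ∉ Set.range (algebraMap (ZMod p) (GaloisField p 2)))
    (hss : IsSupersingular p (LegendreCurve (μ ^ (p - 1)))) :
    ∃ b : ZMod p, algebraMap (ZMod p) (GaloisField p 2) (b * b) =
      -(μ - μ ^ p) ^ 2 / (μ * μ ^ p) := by
  let _ := Fintype.ofFinite (GaloisField p 2)
  have hK : Fintype.card (GaloisField p 2) = p ^ 2 := by
    rw [← Nat.card_eq_fintype_card, GaloisField.card p 2 two_ne_zero]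
  have hμμ : (μ ^ p) ^ p = μ := by rw [← pow_mul, ← sq, ← hK, FiniteField.pow_card]
  have hμ' : μ ^ p ≠ μ := fun h => hμ (ZMod.exists_algebraMap_eq_of_pow_eq_self h)
  obtain ⟨T, hT⟩ := ZMod.exists_algebraMap_eq_of_pow_eq_self (x := μ + μ ^ p)
    (by rw [add_pow_char, hμμ, add_comm])
  obtain ⟨N, hN⟩ := ZMod.exists_algebraMap_eq_of_pow_eq_self (x := μ * μ ^ p)
    (by rw [mul_pow, hμμ, mul_comm])
  have hdisc : algebraMap (ZMod p) _ (T ^ 2 - 4 * N) = (μ - μ ^ p) ^ 2 := by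
    rw [map_sub, map_pow, map_mul, hT, hN, map_ofNat]; ring
  have hsum := FiniteField.sum_pow_eq_zero_of_hasseCoeff_eq_zero
    (by rw [ZMod.card]; omega) hT hN (hasseCoeff_eq_zero_of_isSupersingular (by omega) hK hμ' hss)
  obtain ⟨b, hb⟩ := ZMod.isSquare_neg_discrim_div_of_sum_eq_zero hp
    (not_isSquare_of_algebraMap_eq_sq (ZMod.algebraMap_ne_sub_pow (by omega) hμ' hμμ) hdisc) hsum
  exact ⟨b, by rw [← hb, map_div₀, map_neg, hdisc, hN]⟩
end
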